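/- Let f : [0,1] → [0,1]² be continuous with f(0) = (0,0) and f(1) = (1,1). Let a ∈ ℚ ∩ (0,1) and r ∈ ℚ with r > 0 be such that cl B(f(a), r) ⊆ (0,1)². Then 0 < p'_{a,r} ≤ p_{a,r} < a < q_{a,r} ≤ q'_{a,r} < 1, and the four points f(p_{a,r}), f(q_{a,r}), f(p'_{a,r}), f(q'_{a,r}) all lie on the boundary sphere { x ∈ ℝ² : ‖x - f(a)‖ = r }. -/

import Mathlib

open Set

noncomputable section

/-- The Euclidean plane. -/
abbrev E2 := EuclideanSpace ℝ (Fin 2)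

/-- The point `(x, y)` of the Euclidean plane. -/
def pt (x y : ℝ) : E2 := !₂[x, y]

/-- The closed unit square `[0,1]²`. -/
def unitSq : Set E2 := {p | p 0 ∈ Icc (0:ℝ) 1 ∧ p 1 ∈ Icc (0:ℝ) 1}

/-- The open unit square `(0,1)²`. -/
def openUnitSq : Set E2 := {p | p 0 ∈ Ioo (0:ℝ) 1 ∧ p 1 ∈ Ioo (0:ℝ) 1}

/-- `p_{a,r} = inf{ b ∈ (0,a) ∩ ℚ : f([b,a]) ⊆ B(f(a),r) }`. -/
def pTime (f : ℝ → E2) (a r : ℝ) : ℝ :=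
  sInf {b : ℝ | (∃ q : ℚ, (q:ℝ) = b) ∧ b ∈ Ioo 0 a ∧
    MapsTo f (Icc b a) (Metric.ball (f a) r)}

/-- `q_{a,r} = sup{ b ∈ (a,1) ∩ ℚ : f([a,b]) ⊆ B(f(a),r) }`. -/
def qTime (f : ℝ → E2) (a r : ℝ) : ℝ :=
  sSup {b : ℝ | (∃ q : ℚ, (q:ℝ) = b) ∧ b ∈ Ioo a 1 ∧
    MapsTo f (Icc a b) (Metric.ball (f a) r)}

/-- `p'_{a,r} = sup{ b ∈ (0,a) ∩ ℚ : f(b) ∉ cl B(f(a),r) }`. -/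
def pTime' (f : ℝ → E2) (a r : ℝ) : ℝ :=
  sSup {b : ℝ | (∃ q : ℚ, (q:ℝ) = b) ∧ b ∈ Ioo 0 a ∧
    f b ∉ closure (Metric.ball (f a) r)}

/-- `q'_{a,r} = inf{ b ∈ (a,1) ∩ ℚ : f(b) ∉ cl B(f(a),r) }`. -/
def qTime' (f : ℝ → E2) (a r : ℝ) : ℝ :=
  sInf {b : ℝ | (∃ q : ℚ, (q:ℝ) = b) ∧ b ∈ Ioo a 1 ∧
    f b ∉ closure (Metric.ball (f a) r)}

/-- `K_{a,r} = [p'_{a,r}, p_{a,r}]`. -/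
def Kint (f : ℝ → E2) (a r : ℝ) : Set ℝ := Icc (pTime' f a r) (pTime f a r)

/-- `L_{a,r} = [q_{a,r}, q'_{a,r}]`. -/
def Lint (f : ℝ → E2) (a r : ℝ) : Set ℝ := Icc (qTime f a r) (qTime' f a r)

/-!
By reversing the path, `t ↦ f (1 - t)`, the right exit times `q, q'` at `a` become `1 - p, 1 - p'`
for the left exit times at `1 - a`, so only the left side needs an argument. There, `f 0` lies
outside the closed ball while `f` stays inside the open ball on `(p, a]`; hence `0 < p' ≤ p < a`.
Continuity puts `f p` in the closed ball and `f p'` outside the open ball. Conversely, if `f p` were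
in the open ball (or `f p'` outside the closed ball), continuity and the density of `ℚ` would
produce a rational time beyond `p` (or `p'`) in the defining set, contradicting the infimum
(or supremum).
-/

open Topology Metric

lemma ContinuousOn.exists_rat_lt_mapsTo_Icc {X : Type*} [TopologicalSpace X] {f : ℝ → X}
    {a b x : ℝ} {U : Set X} (hf : ContinuousOn f (Icc a b)) (hx : x ∈ Ioc a b) (hU : IsOpen U)
    (hfx : f x ∈ U) : ∃ q : ℚ, a < q ∧ (q : ℝ) < x ∧ MapsTo f (Icc (q : ℝ) x) U := by
  have hU' : f ⁻¹' U ∈ 𝓝[≤] x := nhdsWithin_le_of_mem (Icc_mem_nhdsLE_of_mem hx)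
    ((hf x (Ioc_subset_Icc_self hx)).preimage_mem_nhdsWithin (hU.mem_nhds hfx))
  obtain ⟨l, hlx, hl⟩ := mem_nhdsLE_iff_exists_Ioc_subset.1 hU'
  obtain ⟨q, hlq, hqx⟩ := exists_rat_btwn (max_lt hlx hx.1)
  exact ⟨q, (le_max_right _ _).trans_lt hlq, hqx,
    fun t ht => hl ⟨((le_max_left _ _).trans_lt hlq).trans_le ht.1, ht.2⟩⟩

lemma ContinuousOn.exists_rat_gt_mapsTo_Icc {X : Type*} [TopologicalSpace X] {f : ℝ → X}
    {a b x : ℝ} {U : Set X} (hf : ContinuousOn f (Icc a b)) (hx : x ∈ Ico a b) (hU : IsOpen U)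
    (hfx : f x ∈ U) : ∃ q : ℚ, x < q ∧ (q : ℝ) < b ∧ MapsTo f (Icc x (q : ℝ)) U := by
  have hU' : f ⁻¹' U ∈ 𝓝[≥] x := nhdsWithin_le_of_mem (Icc_mem_nhdsGE_of_mem hx)
    ((hf x (Ico_subset_Icc_self hx)).preimage_mem_nhdsWithin (hU.mem_nhds hfx))
  obtain ⟨u, hxu, hu⟩ := mem_nhdsGE_iff_exists_Ico_subset.1 hU'
  obtain ⟨q, hxq, hqu⟩ := exists_rat_btwn (lt_min hxu hx.2)
  exact ⟨q, hxq, hqu.trans_le (min_le_right _ _),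
    fun t ht => hu ⟨ht.1, ht.2.trans_lt (hqu.trans_le (min_le_left _ _))⟩⟩

def pTimeSet (f : ℝ → E2) (a r : ℝ) : Set ℝ :=
  {b | (∃ q : ℚ, (q : ℝ) = b) ∧ b ∈ Ioo 0 a ∧ MapsTo f (Icc b a) (ball (f a) r)}

def pTimeSet' (f : ℝ → E2) (a r : ℝ) : Set ℝ :=
  {b | (∃ q : ℚ, (q : ℝ) = b) ∧ b ∈ Ioo 0 a ∧ f b ∉ closure (ball (f a) r)}

def qTimeSet (f : ℝ → E2) (a r : ℝ) : Set ℝ :=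
  {b | (∃ q : ℚ, (q : ℝ) = b) ∧ b ∈ Ioo a 1 ∧ MapsTo f (Icc a b) (ball (f a) r)}

def qTimeSet' (f : ℝ → E2) (a r : ℝ) : Set ℝ :=
  {b | (∃ q : ℚ, (q : ℝ) = b) ∧ b ∈ Ioo a 1 ∧ f b ∉ closure (ball (f a) r)}

section LeftExitTimes

variable {f : ℝ → E2} {a r : ℝ}

lemma bddBelow_pTimeSet : BddBelow (pTimeSet f a r) := ⟨0, fun _ hb => hb.2.1.1.le⟩

lemma bddAbove_pTimeSet' : BddAbove (pTimeSet' f a r) := ⟨a, fun _ hb => hb.2.1.2.le⟩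

lemma exists_mem_pTimeSet_lt (hfc : ContinuousOn f (Icc 0 a)) {x : ℝ} (hx : x ∈ Ioc 0 a)
    (hmaps : MapsTo f (Icc x a) (ball (f a) r)) : ∃ b ∈ pTimeSet f a r, b < x := by
  obtain ⟨q, hq0, hqx, hq⟩ := hfc.exists_rat_lt_mapsTo_Icc hx isOpen_ball (hmaps ⟨le_rfl, hx.2⟩)
  refine ⟨q, ⟨⟨q, rfl⟩, ⟨hq0, hqx.trans_le hx.2⟩, fun t ht => ?_⟩, hqx⟩
  rcases le_total t x with htx | hxt
  exacts [hq ⟨ht.1, htx⟩, hmaps ⟨hxt, ht.2⟩]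

lemma pTime_lt (hfc : ContinuousOn f (Icc 0 a)) {x : ℝ} (hx : x ∈ Ioc 0 a)
    (hmaps : MapsTo f (Icc x a) (ball (f a) r)) : pTime f a r < x :=
  let ⟨_, hb, hbx⟩ := exists_mem_pTimeSet_lt hfc hx hmaps
  (csInf_le bddBelow_pTimeSet hb).trans_lt hbx

lemma mapsTo_Icc_self_ball (hr : 0 < r) : MapsTo f (Icc a a) (ball (f a) r) := by
  simpa [Icc_self] using mem_ball_self (x := f a) hr

lemma pTimeSet_nonempty (hfc : ContinuousOn f (Icc 0 a)) (ha : 0 < a) (hr : 0 < r) :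
    (pTimeSet f a r).Nonempty :=
  let ⟨b, hb, _⟩ := exists_mem_pTimeSet_lt hfc ⟨ha, le_rfl⟩ (mapsTo_Icc_self_ball hr)
  ⟨b, hb⟩

lemma mapsTo_Ioc_pTime (hne : (pTimeSet f a r).Nonempty) :
    MapsTo f (Ioc (pTime f a r) a) (ball (f a) r) := fun _ hx =>
  let ⟨_, hb, hbx⟩ := exists_lt_of_csInf_lt hne hx.1
  hb.2.2 ⟨hbx.le, hx.2⟩

lemma exists_mem_pTimeSet'_gt (hfc : ContinuousOn f (Icc 0 a)) (hr : 0 < r) {x : ℝ}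
    (hx : x ∈ Ico 0 a) (hfx : f x ∉ closedBall (f a) r) : ∃ b ∈ pTimeSet' f a r, x < b := by
  obtain ⟨q, hxq, hqa, hq⟩ :=
    hfc.exists_rat_gt_mapsTo_Icc hx isClosed_closedBall.isOpen_compl hfx
  refine ⟨q, ⟨⟨q, rfl⟩, ⟨hx.1.trans_lt hxq, hqa⟩, ?_⟩, hxq⟩
  rw [closure_ball _ hr.ne']
  exact hq ⟨hxq.le, le_rfl⟩

lemma pTimeSet'_nonempty (hfc : ContinuousOn f (Icc 0 a)) (ha : 0 < a) (hr : 0 < r)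
    (h0 : f 0 ∉ closedBall (f a) r) : (pTimeSet' f a r).Nonempty :=
  let ⟨b, hb, _⟩ := exists_mem_pTimeSet'_gt hfc hr ⟨le_rfl, ha⟩ h0
  ⟨b, hb⟩

lemma pTime'_pos (hne' : (pTimeSet' f a r).Nonempty) : 0 < pTime' f a r :=
  let ⟨_, hb⟩ := hne'
  hb.2.1.1.trans_le (le_csSup bddAbove_pTimeSet' hb)

lemma pTime'_le_pTime (hne : (pTimeSet f a r).Nonempty) (hne' : (pTimeSet' f a r).Nonempty) :
    pTime' f a r ≤ pTime f a r :=
  csSup_le hne' fun _ hb' => le_csInf hne fun _ hb => not_lt.1 fun hbb' =>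
    hb'.2.2 (subset_closure (hb.2.2 ⟨hbb'.le, hb'.2.1.2.le⟩))

lemma pTime_mem_sphere (hfc : ContinuousOn f (Icc 0 a)) (hne : (pTimeSet f a r).Nonempty)
    (hp0 : 0 < pTime f a r) (hpa : pTime f a r < a) : f (pTime f a r) ∈ sphere (f a) r := by
  have hmaps := mapsTo_Ioc_pTime hne
  refine mem_sphere.2 (le_antisymm ?_ (not_lt.1 fun hlt => ?_))
  · have hsub : Ioc (pTime f a r) a ⊆ Icc 0 a ∩ f ⁻¹' closedBall (f a) r :=
      fun t ht => ⟨⟨hp0.le.trans ht.1.le, ht.2⟩, ball_subset_closedBall (hmaps ht)⟩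
    have hp : pTime f a r ∈ closure (Ioc (pTime f a r) a) := by
      rw [closure_Ioc hpa.ne]
      exact left_mem_Icc.2 hpa.le
    exact (closure_minimal hsub (hfc.preimage_isClosed_of_isClosed isClosed_Icc
      isClosed_closedBall) hp).2
  · have hmaps' : MapsTo f (Icc (pTime f a r) a) (ball (f a) r) := fun t ht =>
      (eq_or_lt_of_le ht.1).elim (fun h => h ▸ hlt) fun h => hmaps ⟨h, ht.2⟩
    exact (pTime_lt hfc ⟨hp0, hpa.le⟩ hmaps').false

lemma pTime'_mem_sphere (hfc : ContinuousOn f (Icc 0 a)) (hr : 0 < r)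
    (hne' : (pTimeSet' f a r).Nonempty) (hp'a : pTime' f a r < a) :
    f (pTime' f a r) ∈ sphere (f a) r := by
  refine mem_sphere.2 (le_antisymm (not_lt.1 fun hlt => ?_) ?_)
  · obtain ⟨c, hc, hpc⟩ :=
      exists_mem_pTimeSet'_gt hfc hr ⟨(pTime'_pos hne').le, hp'a⟩ (by simpa using hlt)
    exact (le_csSup bddAbove_pTimeSet' hc).not_gt hpc
  · have hsub : pTimeSet' f a r ⊆ Icc 0 a ∩ f ⁻¹' (ball (f a) r)ᶜ :=
      fun c hc => ⟨Ioo_subset_Icc_self hc.2.1, fun h => hc.2.2 (subset_closure h)⟩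
    have hp' := closure_minimal hsub (hfc.preimage_isClosed_of_isClosed isClosed_Icc
      isOpen_ball.isClosed_compl) (csSup_mem_closure hne' bddAbove_pTimeSet')
    exact not_lt.1 fun h => hp'.2 (mem_ball.2 h)

theorem left_exit_times_mem_sphere (hfc : ContinuousOn f (Icc 0 a)) (ha : 0 < a) (hr : 0 < r)
    (h0 : f 0 ∉ closedBall (f a) r) :
    0 < pTime' f a r ∧ pTime' f a r ≤ pTime f a r ∧ pTime f a r < a ∧
      f (pTime f a r) ∈ sphere (f a) r ∧ f (pTime' f a r) ∈ sphere (f a) r := by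
  have hne := pTimeSet_nonempty hfc ha hr
  have hne' := pTimeSet'_nonempty hfc ha hr h0
  have hp'0 := pTime'_pos hne'
  have hp'p := pTime'_le_pTime hne hne'
  have hpa : pTime f a r < a := pTime_lt hfc ⟨ha, le_rfl⟩ (mapsTo_Icc_self_ball hr)
  exact ⟨hp'0, hp'p, hpa, pTime_mem_sphere hfc hne (hp'0.trans_le hp'p) hpa,
    pTime'_mem_sphere hfc hr hne' (hp'p.trans_lt hpa)⟩

end LeftExitTimes

lemma exists_rat_eq_one_sub_iff {b : ℝ} : (∃ q : ℚ, (q : ℝ) = 1 - b) ↔ ∃ q : ℚ, (q : ℝ) = b :=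
  ⟨fun ⟨q, hq⟩ => ⟨1 - q, by push_cast; linarith⟩, fun ⟨q, hq⟩ => ⟨1 - q, by push_cast; rw [hq]⟩⟩

lemma mapsTo_Icc_one_sub_iff {X : Type*} {g : ℝ → X} {s : Set X} {a b : ℝ} :
    MapsTo (fun t => g (1 - t)) (Icc (1 - b) (1 - a)) s ↔ MapsTo g (Icc a b) s := by
  refine ⟨fun h t ht => ?_, fun h t ht => h ⟨by linarith [ht.2], by linarith [ht.1]⟩⟩
  simpa using h (x := 1 - t) ⟨by linarith [ht.2], by linarith [ht.1]⟩

section Reflection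

variable {f : ℝ → E2} {a r : ℝ}

lemma qTimeSet_eq_image :
    qTimeSet f a r = (1 - ·) '' pTimeSet (fun t => f (1 - t)) (1 - a) r := by
  rw [Function.Involutive.image_eq_preimage_symm (sub_sub_cancel 1)]
  ext b
  simp only [pTimeSet, qTimeSet, mem_preimage, mem_ofPred_eq, sub_sub_cancel,
    exists_rat_eq_one_sub_iff, mapsTo_Icc_one_sub_iff, sub_mem_Ioo_iff_right, sub_zero]

lemma qTimeSet'_eq_image :
    qTimeSet' f a r = (1 - ·) '' pTimeSet' (fun t => f (1 - t)) (1 - a) r := by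
  rw [Function.Involutive.image_eq_preimage_symm (sub_sub_cancel 1)]
  ext b
  simp only [pTimeSet', qTimeSet', mem_preimage, mem_ofPred_eq, sub_sub_cancel,
    exists_rat_eq_one_sub_iff, sub_mem_Ioo_iff_right, sub_zero]

lemma qTime_eq_one_sub_pTime (hne : (pTimeSet (fun t => f (1 - t)) (1 - a) r).Nonempty) :
    qTime f a r = 1 - pTime (fun t => f (1 - t)) (1 - a) r := by
  change sSup (qTimeSet f a r) = _
  rw [qTimeSet_eq_image]
  exact (Antitone.map_csInf_of_continuousAt (by fun_prop) (fun _ _ h => sub_le_sub_left h 1) hne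
    bddBelow_pTimeSet).symm

lemma qTime'_eq_one_sub_pTime' (hne' : (pTimeSet' (fun t => f (1 - t)) (1 - a) r).Nonempty) :
    qTime' f a r = 1 - pTime' (fun t => f (1 - t)) (1 - a) r := by
  change sInf (qTimeSet' f a r) = _
  rw [qTimeSet'_eq_image]
  exact (Antitone.map_csSup_of_continuousAt (by fun_prop) (fun _ _ h => sub_le_sub_left h 1) hne'
    bddAbove_pTimeSet').symm

end Reflection

theorem exit_times_on_sphere_general (f : ℝ → E2)
    (hfc : ContinuousOn f (Icc 0 1))
    (hf0 : f 0 = pt 0 0) (hf1 : f 1 = pt 1 1)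
    (a r : ℚ) (ha : (a:ℝ) ∈ Ioo (0:ℝ) 1) (hr : (0:ℝ) < r)
    (hball : closure (Metric.ball (f a) r) ⊆ openUnitSq) :
    0 < pTime' f a r ∧ pTime' f a r ≤ pTime f a r ∧ pTime f a r < a ∧
    (a:ℝ) < qTime f a r ∧ qTime f a r ≤ qTime' f a r ∧ qTime' f a r < 1 ∧
    ‖f (pTime f a r) - f a‖ = r ∧ ‖f (qTime f a r) - f a‖ = r ∧
    ‖f (pTime' f a r) - f a‖ = r ∧ ‖f (qTime' f a r) - f a‖ = r := by
  have hcorner (t : ℝ) (ht : f t ∉ openUnitSq) : f t ∉ closedBall (f a) r := fun h =>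
    ht (hball (closure_ball (f a) hr.ne' ▸ h))
  have h0 := hcorner 0 (by simp [hf0, openUnitSq, pt])
  have h1 := hcorner 1 (by simp [hf1, openUnitSq, pt])
  set g : ℝ → E2 := fun t => f (1 - t)
  have ha' : (0 : ℝ) < 1 - a := sub_pos.2 ha.2
  have hg : ContinuousOn g (Icc 0 (1 - a)) :=
    hfc.comp (by fun_prop) fun t ht => ⟨by linarith [ht.2, ha.1], by linarith [ht.1]⟩
  have hg0 : g 0 ∉ closedBall (g (1 - a)) r := by simpa [g] using h1
  obtain ⟨hp'0, hp'p, hpa, hp, hp'⟩ :=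
    left_exit_times_mem_sphere (hfc.mono (Icc_subset_Icc_right ha.2.le)) ha.1 hr h0
  obtain ⟨hq'1, hqq', haq, hq, hq'⟩ := left_exit_times_mem_sphere hg ha' hr hg0
  rw [qTime_eq_one_sub_pTime (pTimeSet_nonempty hg ha' hr),
    qTime'_eq_one_sub_pTime' (pTimeSet'_nonempty hg ha' hr hg0)]
  refine ⟨hp'0, hp'p, hpa, by linarith, by linarith, by linarith, mem_sphere_iff_norm.1 hp,
    ?_, mem_sphere_iff_norm.1 hp', ?_⟩
  · simpa [g, mem_sphere_iff_norm] using hq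
  · simpa [g, mem_sphere_iff_norm] using hq'

/-- The exit times are ordered around `a` and the corresponding points of the path lie on
the boundary sphere of the ball. -/
theorem exit_times_on_sphere (f : ℝ → E2)
    (hfc : ContinuousOn f (Icc 0 1)) (hfm : MapsTo f (Icc 0 1) unitSq)
    (hf0 : f 0 = pt 0 0) (hf1 : f 1 = pt 1 1)
    (a r : ℚ) (ha : (a:ℝ) ∈ Ioo (0:ℝ) 1) (hr : (0:ℝ) < r)
    (hball : closure (Metric.ball (f a) r) ⊆ openUnitSq) :
    0 < pTime' f a r ∧ pTime' f a r ≤ pTime f a r ∧ pTime f a r < a ∧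
    (a:ℝ) < qTime f a r ∧ qTime f a r ≤ qTime' f a r ∧ qTime' f a r < 1 ∧
    ‖f (pTime f a r) - f a‖ = r ∧ ‖f (qTime f a r) - f a‖ = r ∧
    ‖f (pTime' f a r) - f a‖ = r ∧ ‖f (qTime' f a r) - f a‖ = r :=
  exit_times_on_sphere_general f hfc hf0 hf1 a r ha hr hball
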